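/- arXiv:1908.10957 — 5 statements merged into one kernel-verified Lean document; each statement's English description precedes it below -/
import Mathlib

section
/- Let (X,ρ) be a compact metric space and let {τ_n}_{n≥1} be a sequence of Borel measurable maps τ_n : X → X converging uniformly to a continuous map τ : X → X. Set τ_{(0,n)} = τ_n ∘ τ_{n-1} ∘ ⋯ ∘ τ_1 (with τ_0 the identity). Let η be a Borel probability measure on X, let ν_i = (τ_{(0,i)})_* η be the pushforward measures, and let μ_n = (1/n) Σ_{i=1}^n ν_i. Then any weak-* limit point μ of the sequence {μ_n}_{n≥1} (i.e., any weak-* limit of a subsequence μ_{n_k}) is τ-invariant: τ_* μ = μ. -/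
/-!
For a bounded continuous `f`, `∫ f dν_{i+1} = ∫ f ∘ τ_{i+1} dν_i`, and this is uniformly close to
`∫ f ∘ τ dν_i` for large `i` because `f` is uniformly continuous on the compact space `X`. Hence
`∑_{i ≤ n} (∫ f ∘ τ dν_i - ∫ f dν_i)` is a telescoping term bounded by `2‖f‖` plus a sum of terms
tending to `0`, so `∫ f ∘ τ dμ_n - ∫ f dμ_n → 0`. Along the subsequence this gives
`∫ f ∘ τ dμ = ∫ f dμ`, and bounded continuous functions determine finite Borel measures on a
metric space.
-/

open MeasureTheory Filter Topology
open scoped ENNReal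

/-- `iterComp τ n = τ_n ∘ τ_{n-1} ∘ ⋯ ∘ τ_1` (with `iterComp τ 0 = id`). -/
def iterComp {X : Type*} (τ : ℕ → X → X) : ℕ → X → X
  | 0 => id
  | n + 1 => τ (n + 1) ∘ iterComp τ n

open Finset BoundedContinuousFunction

theorem tendsto_cesaro_sub_of_tendsto_sub_succ {a c : ℕ → ℝ} {C : ℝ} (ha : ∀ n, ‖a n‖ ≤ C)
    (hca : Tendsto (fun n => c n - a (n + 1)) atTop (𝓝 0)) :
    Tendsto (fun n : ℕ => (n : ℝ)⁻¹ * ∑ j ∈ range n, (c j - a j)) atTop (𝓝 0) := by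
  have htelescope : ∀ n, ∑ j ∈ range n, (c j - a j)
      = ∑ j ∈ range n, (c j - a (j + 1)) + (a n - a 0) := fun n => by
    rw [← sum_range_sub a n, ← sum_add_distrib]
    exact sum_congr rfl fun _ _ => by ring
  have hbdd : IsBoundedUnder (· ≤ ·) atTop fun n => ‖a n - a 0‖ :=
    isBoundedUnder_of ⟨C + C, fun n => (norm_sub_le _ _).trans (add_le_add (ha n) (ha 0))⟩
  simp_rw [htelescope, mul_add]
  simpa using hca.cesaro.add (tendsto_inv_atTop_nhds_zero_nat.zero_mul_isBoundedUnder_le hbdd)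

section

variable {X : Type*} [MeasurableSpace X]

theorem measurable_iterComp {τ : ℕ → X → X} (hτ : ∀ n, 1 ≤ n → Measurable (τ n)) :
    ∀ n, Measurable (iterComp τ n)
  | 0 => measurable_id
  | n + 1 => (hτ (n + 1) n.succ_pos).comp (measurable_iterComp hτ n)

theorem map_iterComp_succ {τ : ℕ → X → X}
    (hτ : ∀ n, 1 ≤ n → Measurable (τ n)) (η : Measure X) (n : ℕ) :
    η.map (iterComp τ (n + 1)) = (η.map (iterComp τ n)).map (τ (n + 1)) :=
  (Measure.map_map (hτ (n + 1) n.succ_pos) (measurable_iterComp hτ n)).symm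

noncomputable def cesaroPushforward (τ : ℕ → X → X) (η : Measure X) (n : ℕ) : Measure X :=
  (n : ℝ≥0∞)⁻¹ • ∑ i ∈ Icc 1 n, η.map (iterComp τ i)

theorem integral_cesaroPushforward {τ : ℕ → X → X} {η : Measure X} {f : X → ℝ}
    (hf : ∀ i, Integrable f (η.map (iterComp τ i))) (n : ℕ) :
    ∫ x, f x ∂cesaroPushforward τ η n
      = (n : ℝ)⁻¹ * ∑ j ∈ range n, ∫ x, f x ∂η.map (iterComp τ (j + 1)) := by
  rw [cesaroPushforward, integral_smul_measure, integral_finsetSum_measure fun i _ => hf i,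
    ENNReal.toReal_inv, ENNReal.toReal_natCast, smul_eq_mul, range_eq_Ico,
    sum_Ico_add' (fun i => ∫ x, f x ∂η.map (iterComp τ i))]
  rfl

theorem tendsto_integral_sub_of_tendstoUniformly {ι : Type*} {l : Filter ι}
    {ν : ι → Measure X} [∀ i, IsProbabilityMeasure (ν i)] {F : ι → X → ℝ} {f : X → ℝ}
    (hF : ∀ i, Integrable (F i) (ν i)) (hf : ∀ i, Integrable f (ν i))
    (h : TendstoUniformly F f l) :
    Tendsto (fun i => ∫ x, f x ∂ν i - ∫ x, F i x ∂ν i) l (𝓝 0) := by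
  rw [Metric.nhds_basis_closedBall.tendsto_right_iff]
  intro ε hε
  filter_upwards [Metric.tendstoUniformly_iff.mp h ε hε] with i hi
  rw [Metric.mem_closedBall, dist_zero_right, ← integral_sub (hf i) (hF i)]
  exact (norm_integral_le_of_norm_le_const
    (ae_of_all _ fun x => (dist_eq_norm (f x) (F i x) ▸ hi x).le)).trans_eq (by simp)

theorem tendsto_integral_comp_sub_integral_cesaroPushforward [UniformSpace X]
    [CompactSpace X] [OpensMeasurableSpace X] {τseq : ℕ → X → X}
    (hmeas : ∀ n, 1 ≤ n → Measurable (τseq n)) {τ : X → X} (hτ : Measurable τ)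
    (hconv : TendstoUniformly τseq τ atTop) (η : Measure X) [IsProbabilityMeasure η]
    (f : X →ᵇ ℝ) :
    Tendsto (fun n => ∫ x, f (τ x) ∂cesaroPushforward τseq η n
      - ∫ x, f x ∂cesaroPushforward τseq η n) atTop (𝓝 0) := by
  have : ∀ i, IsProbabilityMeasure (η.map (iterComp τseq i)) := fun i =>
    Measure.isProbabilityMeasure_map (measurable_iterComp hmeas i).aemeasurable
  have hcomp_integrable {T : X → X} (hT : Measurable T) (i : ℕ) :
      Integrable (fun x => f (T x)) (η.map (iterComp τseq i)) :=
    .of_bound (f.continuous.measurable.comp hT).aestronglyMeasurable ‖f‖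
      (ae_of_all _ fun _ => f.norm_coe_le_norm _)
  have hstep : Tendsto (fun j => ∫ x, f (τ x) ∂η.map (iterComp τseq (j + 1))
      - ∫ x, f x ∂η.map (iterComp τseq (j + 2))) atTop (𝓝 0) := by
    have hunif : TendstoUniformly (fun j => f ∘ τseq (j + 2)) (f ∘ τ) atTop :=
      (CompactSpace.uniformContinuous_of_continuous f.continuous).comp_tendstoUniformly
        (tendstoUniformly_iff_seq_tendstoUniformly.mp hconv _ (tendsto_add_atTop_nat 2))
    refine (tendsto_integral_sub_of_tendstoUniformly
      (ν := fun j => η.map (iterComp τseq (j + 1)))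
      (fun j => hcomp_integrable (hmeas (j + 2) (by omega)) _) (fun _ => hcomp_integrable hτ _)
      hunif).congr fun j => ?_
    rw [map_iterComp_succ hmeas η (j + 1),
      integral_map (hmeas _ (by omega)).aemeasurable f.continuous.aestronglyMeasurable]
  simp_rw [integral_cesaroPushforward (hcomp_integrable hτ),
    integral_cesaroPushforward fun _ => f.integrable _, ← mul_sub, ← sum_sub_distrib]
  exact tendsto_cesaro_sub_of_tendsto_sub_succ (fun _ => f.norm_integral_le_norm _) hstep

end

/-- Generalized Krylov–Bogoliubov theorem: any weak-* limit point of the Cesàro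
averages of the pushforwards of an initial probability measure under a
non-autonomous system converging uniformly to a continuous map `τ` is `τ`-invariant. -/
theorem weakStarLimitPoint_isInvariant
    {X : Type*} [MetricSpace X] [CompactSpace X] [MeasurableSpace X] [BorelSpace X]
    (τseq : ℕ → X → X) (hmeas : ∀ n, 1 ≤ n → Measurable (τseq n))
    (τ : X → X) (hτcont : Continuous τ)
    (hconv : TendstoUniformly τseq τ atTop)
    (η : Measure X) [IsProbabilityMeasure η]
    (μseq : ℕ → Measure X)
    (hμseq : ∀ n, μseq n
      = (n : ℝ≥0∞)⁻¹ • ∑ i ∈ Finset.Icc 1 n, Measure.map (iterComp τseq i) η)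
    (μ : Measure X) [IsProbabilityMeasure μ]
    (φ : ℕ → ℕ) (hφ : StrictMono φ)
    (hlim : ∀ g : X → ℝ, Continuous g →
      Tendsto (fun k => ∫ x, g x ∂(μseq (φ k))) atTop (𝓝 (∫ x, g x ∂μ))) :
    Measure.map τ μ = μ := by
  obtain rfl : μseq = cesaroPushforward τseq η := funext hμseq
  have : IsProbabilityMeasure (μ.map τ) :=
    Measure.isProbabilityMeasure_map hτcont.aemeasurable
  refine ext_of_forall_integral_eq_of_IsFiniteMeasure fun f => ?_
  rw [integral_map hτcont.aemeasurable f.continuous.aestronglyMeasurable]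
  have hdiff := (tendsto_integral_comp_sub_integral_cesaroPushforward hmeas hτcont.measurable
    hconv η f).comp hφ.tendsto_atTop
  exact sub_eq_zero.mp <| tendsto_nhds_unique
    ((hlim _ (f.continuous.comp hτcont)).sub (hlim _ f.continuous)) hdiff
end

section
/- For n ≥ 2 define τ_n : [0,1] → [0,1] by τ_n(x) = (1 − 1/n)x for x ∈ [0, 1/2) and τ_n(x) = 2x − 1 for x ∈ [1/2, 1], and let m be Lebesgue measure on [0,1]. Set τ_{(2,k)} = τ_k ∘ τ_{k-1} ∘ ⋯ ∘ τ_2 for k ≥ 2. Then for every δ > 0, sup_{k≥2} m(τ_{(2,k)}^{-1}([0,δ])) = 1; in particular, for every δ > 0 and every ε > 0 there exists k such that m(τ_{(2,k)}^{-1}([0,δ])) > 1 − ε. -/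
/-!
A point `x < 1 - 2⁻ᵏ` cannot stay in `[1/2, 1]` during the first `k` steps, because the
doubling branch `y ↦ 2y - 1` doubles the distance `1 - y` to the right endpoint. Once an orbit
is below `1/2` it stays there and `n · τ_{(2,n)}(x)` is constant, since
`n · τ_n(y) = (n - 1) · y`; hence `τ_{(2,n)}(x) ≤ k / (2n) ≤ δ` for large `n`. So
`τ_{(2,n)}⁻¹[0, δ]` contains `[0, 1 - 2⁻ᵏ)` for all large `n`.
-/

open MeasureTheory Filter Topology
open scoped ENNReal

/-- The maps `τ_n(x) = (1 − 1/n)x` on `[0,1/2)` and `τ_n(x) = 2x − 1` on `[1/2,1]`. -/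
noncomputable def tauN (n : ℕ) (x : ℝ) : ℝ :=
  if x < 1 / 2 then (1 - 1 / (n : ℝ)) * x else 2 * x - 1

/-- `comp2 k = τ_k ∘ τ_{k-1} ∘ ⋯ ∘ τ_2` for `k ≥ 2`. -/
noncomputable def comp2 : ℕ → ℝ → ℝ
  | 0 => id
  | 1 => id
  | k + 2 => tauN (k + 2) ∘ comp2 (k + 1)

/-- Lebesgue measure on `[0,1]`. -/
noncomputable def m : Measure ℝ := volume.restrict (Set.Icc 0 1)

lemma one_sub_one_div_natCast_mem_Icc (n : ℕ) : 1 - 1 / (n : ℝ) ∈ Set.Icc 0 1 :=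
  ⟨sub_nonneg.2 (by simpa using Nat.cast_inv_le_one n), sub_le_self _ (by positivity)⟩

section tauN

variable {n : ℕ} {y : ℝ}

lemma tauN_of_half_le (hy : 1 / 2 ≤ y) : tauN n y = 2 * y - 1 :=
  if_neg hy.not_gt

lemma tauN_nonneg (hy : 0 ≤ y) : 0 ≤ tauN n y := by
  unfold tauN
  split_ifs
  · exact mul_nonneg (one_sub_one_div_natCast_mem_Icc n).1 hy
  · linarith

lemma tauN_lt_half (hy : y < 1 / 2) : tauN n y < 1 / 2 := by
  obtain ⟨h0, h1⟩ := one_sub_one_div_natCast_mem_Icc n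
  rw [tauN, if_pos hy]
  rcases le_or_gt 0 y with hy0 | hy0 <;> nlinarith

lemma natCast_mul_tauN_of_lt_half (hn : n ≠ 0) (hy : y < 1 / 2) :
    (n : ℝ) * tauN n y = (n - 1) * y := by
  rw [tauN, if_pos hy]
  field_simp

end tauN

section comp2

variable {k K : ℕ} {x : ℝ}

lemma comp2_succ (hk : k ≠ 0) (x : ℝ) : comp2 (k + 1) x = tauN (k + 1) (comp2 k x) := by
  obtain ⟨j, rfl⟩ := Nat.exists_eq_succ_of_ne_zero hk
  rfl

lemma comp2_nonneg (hx : 0 ≤ x) : ∀ k, 0 ≤ comp2 k x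
  | 0 | 1 => hx
  | k + 2 => tauN_nonneg (comp2_nonneg hx (k + 1))

lemma comp2_lt_half_of_le (hk : k ≠ 0) (hkK : k ≤ K) (hx : comp2 k x < 1 / 2) :
    comp2 K x < 1 / 2 := by
  induction K, hkK using Nat.le_induction with
  | base => exact hx
  | succ K hkK ih => rw [comp2_succ (by omega)]; exact tauN_lt_half ih

lemma natCast_mul_comp2_of_le (hk : k ≠ 0) (hkK : k ≤ K) (hx : comp2 k x < 1 / 2) :
    (K : ℝ) * comp2 K x = k * comp2 k x := by
  induction K, hkK using Nat.le_induction with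
  | base => rfl
  | succ K hkK ih =>
    rw [comp2_succ (by omega), natCast_mul_tauN_of_lt_half (by omega)
      (comp2_lt_half_of_le hk hkK hx), ← ih]
    push_cast
    ring

lemma two_pow_mul_one_sub_le (hk : k ≠ 0) (hx : 1 / 2 ≤ comp2 k x) :
    2 ^ k * (1 - x) ≤ 2 * (1 - comp2 k x) := by
  induction k, Nat.one_le_iff_ne_zero.2 hk using Nat.le_induction with
  | base => simp [comp2]
  | succ k hk1 ih =>
    have hk : k ≠ 0 := Nat.one_le_iff_ne_zero.1 hk1
    have hhalf : 1 / 2 ≤ comp2 k x := by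
      by_contra hlt
      exact (comp2_lt_half_of_le hk k.le_succ (not_le.1 hlt)).not_ge hx
    rw [comp2_succ hk, tauN_of_half_le hhalf] at hx ⊢
    rw [pow_succ]
    linarith [ih hk hhalf]

lemma comp2_lt_half_of_lt (hk : k ≠ 0) (hx : x < 1 - (1 / 2) ^ k) : comp2 k x < 1 / 2 := by
  by_contra hge
  have h := two_pow_mul_one_sub_le hk (not_lt.1 hge)
  have h2k : (2 : ℝ) ^ k * (1 / 2) ^ k = 1 := by rw [← mul_pow]; norm_num
  nlinarith [pow_pos (two_pos (α := ℝ)) k]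

end comp2

lemma Ico_subset_preimage_comp2 {k K : ℕ} {δ : ℝ} (hk : k ≠ 0) (hkK : k ≤ K)
    (hK : k ≤ 2 * δ * K) : Set.Ico 0 (1 - (1 / 2) ^ k) ⊆ comp2 K ⁻¹' Set.Icc 0 δ := by
  rintro x ⟨hx0, hx⟩
  have hlt := comp2_lt_half_of_lt hk hx
  have hK0 : (0 : ℝ) < K := by exact_mod_cast (Nat.pos_of_ne_zero hk).trans_le hkK
  refine ⟨comp2_nonneg hx0 K, le_of_mul_le_mul_left ?_ hK0⟩
  calc (K : ℝ) * comp2 K x = k * comp2 k x := natCast_mul_comp2_of_le hk hkK hlt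
    _ ≤ k * (1 / 2) := by gcongr
    _ ≤ K * δ := by linarith

instance : IsProbabilityMeasure m := ⟨by simp [m]⟩

lemma m_Ico_zero {t : ℝ} (ht : t ≤ 1) : m (Set.Ico 0 t) = ENNReal.ofReal t := by
  rw [m, Measure.restrict_apply measurableSet_Ico,
    Set.inter_eq_self_of_subset_left (Set.Ico_subset_Icc_self.trans (Set.Icc_subset_Icc_right ht)),
    Real.volume_Ico, sub_zero]

lemma exists_measure_preimage_comp2_gt {δ ε : ℝ} (hδ : 0 < δ) (hε : 0 < ε) :
    ∃ K : ℕ, 2 ≤ K ∧ ENNReal.ofReal (1 - ε) < m (comp2 K ⁻¹' Set.Icc 0 δ) := by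
  obtain ⟨n, hn⟩ := exists_pow_lt_of_lt_one hε (by norm_num : (1 / 2 : ℝ) < 1)
  set K := max (n + 2) ⌈(n + 1 : ℝ) / (2 * δ)⌉₊
  have hK : ((n + 1 : ℕ) : ℝ) ≤ 2 * δ * K := by
    have hceil := (Nat.le_ceil _).trans
      (Nat.cast_le.2 (le_max_right (n + 2) ⌈(n + 1 : ℝ) / (2 * δ)⌉₊))
    rw [div_le_iff₀ (by positivity)] at hceil
    push_cast
    linarith
  have hpow : (1 / 2 : ℝ) ^ (n + 1) < ε :=
    (pow_le_pow_of_le_one (by norm_num) (by norm_num) n.le_succ).trans_lt hn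
  have hpos : (0 : ℝ) < (1 / 2) ^ (n + 1) := by positivity
  have hlt_one : (1 / 2 : ℝ) ^ (n + 1) < 1 :=
    pow_lt_one₀ (by norm_num) (by norm_num) n.succ_ne_zero
  refine ⟨K, le_max_of_le_left (by omega), ?_⟩
  calc ENNReal.ofReal (1 - ε) < ENNReal.ofReal (1 - (1 / 2) ^ (n + 1)) :=
        (ENNReal.ofReal_lt_ofReal_iff (by linarith)).2 (by linarith)
    _ = m (Set.Ico 0 (1 - (1 / 2) ^ (n + 1))) := (m_Ico_zero (by linarith)).symm
    _ ≤ m (comp2 K ⁻¹' Set.Icc 0 δ) :=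
        measure_mono (Ico_subset_preimage_comp2 n.succ_ne_zero (le_max_of_le_left (by omega)) hK)

/-- For every `δ > 0`, `sup_{k ≥ 2} m(τ_{(2,k)}^{-1}([0,δ])) = 1`; in particular for
every `δ, ε > 0` there is `k ≥ 2` with `m(τ_{(2,k)}^{-1}([0,δ])) > 1 − ε`. -/
theorem sup_measure_preimage_eq_one :
    ∀ δ : ℝ, 0 < δ →
      (⨆ (k : ℕ) (_ : 2 ≤ k), m (comp2 k ⁻¹' Set.Icc 0 δ)) = 1 ∧
      ∀ ε : ℝ, 0 < ε → ∃ k : ℕ, 2 ≤ k ∧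
        ENNReal.ofReal (1 - ε) < m (comp2 k ⁻¹' Set.Icc 0 δ) := by
  intro δ hδ
  have hgt := fun ε (hε : 0 < ε) => exists_measure_preimage_comp2_gt hδ hε
  refine ⟨le_antisymm (iSup₂_le fun k _ => prob_le_one) (le_of_forall_lt fun c hc => ?_), hgt⟩
  obtain ⟨r, -, hcr, hr⟩ := ENNReal.lt_iff_exists_real_btwn.1 hc
  obtain ⟨k, hk, hlt⟩ := hgt (1 - r) (by simpa using hr)
  rw [sub_sub_cancel] at hlt
  exact lt_biSup_iff.2 ⟨k, hk, hcr.trans hlt⟩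
end

section
/- Let q ≥ 1 and s > 0, and let τ_n : [0,1] → [0,1] be a sequence of maps converging uniformly to τ : [0,1] → [0,1]. Assume each τ_n is piecewise monotone with at most q branches, and on each branch τ_n expands distances by factor at least s: |τ_n(x) − τ_n(y)| ≥ s|x − y| whenever x, y lie in the same interval of monotonicity of τ_n. Then for every interval J ⊆ [0,1], the Lebesgue measure of the preimage satisfies m(τ^{-1}(J)) ≤ (q/s)·m(J). -/
/-!
On each of its at most `q` branches, `τ_n` shrinks preimages by the factor `1/s`, so the preimage
of `[c, d]` under `τ_n` has measure at most `(q/s)(d - c)`; the partition points are a null set.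
Once `|τ_n - τ| < δ` on `[0,1]`, `τ⁻¹[c, d] ⊆ τ_n⁻¹[c - δ, d + δ]`, and letting `δ → 0` gives the
same bound for `τ`. Finally an interval `J` lies in `[inf J, sup J]` and has measure `sup J - inf J`.
-/

open MeasureTheory Filter Topology
open scoped ENNReal

/-- `T : [0,1] → [0,1]` is piecewise monotone with at most `q` branches, expanding
distances by at least `s` on each branch: there is a partition
`0 = a_0 < a_1 < ⋯ < a_r = 1`, `r ≤ q`, such that `T` is strictly monotone on each
open interval `(a_{i-1}, a_i)` and `|T x − T y| ≥ s|x − y|` there. -/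
def PiecewiseMonotoneExpanding (T : ℝ → ℝ) (q : ℕ) (s : ℝ) : Prop :=
  ∃ (r : ℕ) (a : ℕ → ℝ), 0 < r ∧ r ≤ q ∧ a 0 = 0 ∧ a r = 1 ∧
    (∀ i < r, a i < a (i + 1)) ∧
    (∀ i < r, StrictMonoOn T (Set.Ioo (a i) (a (i + 1))) ∨
      StrictAntiOn T (Set.Ioo (a i) (a (i + 1)))) ∧
    ∀ i < r, ∀ x ∈ Set.Ioo (a i) (a (i + 1)), ∀ y ∈ Set.Ioo (a i) (a (i + 1)),
      s * |x - y| ≤ |T x - T y|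

open Set

lemma Icc_subset_biUnion_Ioo_union_range {α : Type*} [LinearOrder α] (a : ℕ → α) :
    ∀ r : ℕ, Icc (a 0) (a r) ⊆ (⋃ i ∈ Finset.range r, Ioo (a i) (a (i + 1))) ∪ range a
  | 0 => fun x hx => Or.inr ⟨0, (Icc_self (a 0) ▸ hx).symm⟩
  | r + 1 => by
    rintro x ⟨h0, h1⟩
    rcases le_or_gt x (a r) with hle | hlt
    · refine (Icc_subset_biUnion_Ioo_union_range a r ⟨h0, hle⟩).imp (fun hx => ?_) id
      exact biUnion_subset_biUnion_left (by simp) hx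
    rcases h1.eq_or_lt with rfl | hlt'
    · exact Or.inr ⟨r + 1, rfl⟩
    · exact Or.inl (mem_biUnion (Finset.mem_range.2 r.lt_succ_self) ⟨hlt, hlt'⟩)

lemma volume_le_ofReal_div_of_expanding {T : ℝ → ℝ} {S : Set ℝ} {s c d : ℝ} (hs : 0 < s)
    (hT : ∀ x ∈ S, ∀ y ∈ S, s * |x - y| ≤ |T x - T y|) (hmaps : MapsTo T S (Icc c d)) :
    volume S ≤ ENNReal.ofReal ((d - c) / s) := by
  refine (Real.volume_le_diam S).trans (Metric.ediam_le fun x hx y hy => ?_)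
  rw [edist_dist, Real.dist_eq]
  refine ENNReal.ofReal_le_ofReal ((le_div_iff₀ hs).2 ?_)
  rw [mul_comm]
  calc s * |x - y| ≤ |T x - T y| := hT x hx y hy
    _ ≤ d - c := Real.dist_le_of_mem_Icc (hmaps hx) (hmaps hy)

lemma PiecewiseMonotoneExpanding.volume_preimage_Icc_inter_le {T : ℝ → ℝ} {q : ℕ} {s : ℝ}
    (hT : PiecewiseMonotoneExpanding T q s) (hs : 0 < s) (c d : ℝ) :
    volume (T ⁻¹' Icc c d ∩ Icc 0 1) ≤ ENNReal.ofReal (q / s) * ENNReal.ofReal (d - c) := by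
  obtain ⟨r, a, -, hrq, ha0, har, -, -, hexp⟩ := hT
  set branch : ℕ → Set ℝ := fun i => T ⁻¹' Icc c d ∩ Ioo (a i) (a (i + 1))
  have hcover : T ⁻¹' Icc c d ∩ Icc 0 1 ⊆ (⋃ i ∈ Finset.range r, branch i) ∪ range a := by
    rintro x ⟨hxT, hx⟩
    rw [← ha0, ← har] at hx
    refine (Icc_subset_biUnion_Ioo_union_range a r hx).imp (fun hx' => ?_) id
    simp only [mem_iUnion] at hx' ⊢
    obtain ⟨i, hi, hxi⟩ := hx'
    exact ⟨i, hi, hxT, hxi⟩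
  have hbranch : ∀ i ∈ Finset.range r, volume (branch i) ≤ ENNReal.ofReal ((d - c) / s) :=
    fun i hi => volume_le_ofReal_div_of_expanding hs
      (fun x hx y hy => hexp i (Finset.mem_range.1 hi) x hx.2 y hy.2) fun _ hx => hx.1
  calc volume (T ⁻¹' Icc c d ∩ Icc 0 1)
      ≤ volume (⋃ i ∈ Finset.range r, branch i) + volume (range a) :=
        (measure_mono hcover).trans (measure_union_le _ _)
    _ = volume (⋃ i ∈ Finset.range r, branch i) := by
        rw [(countable_range a).measure_zero, add_zero]
    _ ≤ ∑ i ∈ Finset.range r, volume (branch i) := measure_biUnion_finset_le _ _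
    _ ≤ r * ENNReal.ofReal ((d - c) / s) := by
        simpa using Finset.sum_le_sum hbranch
    _ ≤ q * ENNReal.ofReal ((d - c) / s) := by gcongr
    _ = ENNReal.ofReal (q / s) * ENNReal.ofReal (d - c) := by
        rw [← ENNReal.ofReal_natCast, ← ENNReal.ofReal_mul (Nat.cast_nonneg q),
          ← ENNReal.ofReal_mul (by positivity)]
        ring_nf

lemma measure_preimage_Icc_inter_le_of_tendstoUniformlyOn {ι α : Type*} [MeasurableSpace α]
    {μ : Measure α} {K : Set α} {p : Filter ι} [p.NeBot] {F : ι → α → ℝ} {f : α → ℝ}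
    {C : ℝ≥0∞} (hC : C ≠ ∞) (hF : TendstoUniformlyOn F f p K)
    (hbound : ∀ i c d, μ (F i ⁻¹' Icc c d ∩ K) ≤ C * ENNReal.ofReal (d - c)) (c d : ℝ) :
    μ (f ⁻¹' Icc c d ∩ K) ≤ C * ENNReal.ofReal (d - c) := by
  have hδ : ∀ δ > 0, μ (f ⁻¹' Icc c d ∩ K) ≤ C * ENNReal.ofReal (d + δ - (c - δ)) := by
    intro δ hδ
    obtain ⟨i, hi⟩ := (Metric.tendstoUniformlyOn_iff.1 hF δ hδ).exists
    refine (measure_mono ?_).trans (hbound i (c - δ) (d + δ))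
    rintro x ⟨hfx, hx⟩
    have hclose := hi x hx
    rw [Real.dist_eq, abs_sub_lt_iff] at hclose
    exact ⟨⟨by linarith [hfx.1], by linarith [hfx.2]⟩, hx⟩
  have hlim : Tendsto (fun δ : ℝ => C * ENNReal.ofReal (d + δ - (c - δ))) (𝓝[>] 0)
      (𝓝 (C * ENNReal.ofReal (d - c))) := by
    refine ENNReal.Tendsto.const_mul (ENNReal.tendsto_ofReal ?_) (Or.inr hC) |>.mono_left
      nhdsWithin_le_nhds
    have := ((continuous_const.add continuous_id).sub (continuous_const.sub continuous_id)).tendsto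
      (0 : ℝ) (f := fun δ : ℝ => d + δ - (c - δ))
    simpa using this
  exact ge_of_tendsto hlim (eventually_nhdsWithin_of_forall hδ)

lemma Set.OrdConnected.volume_eq {J : Set ℝ} (hJ : J.OrdConnected) (hb : BddBelow J)
    (ha : BddAbove J) : volume J = ENNReal.ofReal (sSup J - sInf J) := by
  rcases J.eq_empty_or_nonempty with rfl | hne
  · simp
  refine le_antisymm ((measure_mono (subset_Icc_csInf_csSup hb ha)).trans_eq Real.volume_Icc) ?_
  rw [← Real.volume_Ioo]
  exact measure_mono (IsConnected.Ioo_csInf_csSup_subset ⟨hne, hJ.isPreconnected⟩ hb ha)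

theorem measure_preimage_interval_le_general (q : ℕ) (s : ℝ) (hs : 0 < s)
    (τseq : ℕ → ℝ → ℝ) (τ : ℝ → ℝ)
    (hconv : TendstoUniformlyOn τseq τ atTop (Set.Icc 0 1))
    (hpm : ∀ n, PiecewiseMonotoneExpanding (τseq n) q s) :
    ∀ J : Set ℝ, J ⊆ Set.Icc 0 1 → J.OrdConnected →
      m (τ ⁻¹' J) ≤ ENNReal.ofReal ((q : ℝ) / s) * m J := by
  intro J hJ hJc
  have hb : BddBelow J := bddBelow_Icc.mono hJ
  have ha : BddAbove J := bddAbove_Icc.mono hJ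
  have hτ := measure_preimage_Icc_inter_le_of_tendstoUniformlyOn ENNReal.ofReal_ne_top hconv
    (fun n => (hpm n).volume_preimage_Icc_inter_le hs) (sInf J) (sSup J)
  rw [m, Measure.restrict_apply' measurableSet_Icc, Measure.restrict_apply' measurableSet_Icc,
    inter_eq_left.2 hJ, hJc.volume_eq hb ha]
  exact (measure_mono (inter_subset_inter_left _
    (preimage_mono (subset_Icc_csInf_csSup hb ha)))).trans hτ

/-- If `τ_n ⇉ τ` on `[0,1]` and each `τ_n` is piecewise monotone with at most `q`
branches, expanding by at least `s` on each branch, then `m(τ^{-1}(J)) ≤ (q/s)·m(J)`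
for every interval `J ⊆ [0,1]`. -/
theorem measure_preimage_interval_le (q : ℕ) (hq : 1 ≤ q) (s : ℝ) (hs : 0 < s)
    (τseq : ℕ → ℝ → ℝ) (τ : ℝ → ℝ)
    (hmaps : ∀ n, Set.MapsTo (τseq n) (Set.Icc 0 1) (Set.Icc 0 1))
    (hτmaps : Set.MapsTo τ (Set.Icc 0 1) (Set.Icc 0 1))
    (hconv : TendstoUniformlyOn τseq τ atTop (Set.Icc 0 1))
    (hpm : ∀ n, PiecewiseMonotoneExpanding (τseq n) q s) :
    ∀ J : Set ℝ, J ⊆ Set.Icc 0 1 → J.OrdConnected →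
      m (τ ⁻¹' J) ≤ ENNReal.ofReal ((q : ℝ) / s) * m J :=
  measure_preimage_interval_le_general q s hs τseq τ hconv hpm
end

section
/- Let q ≥ 1 and s > 0, and let τ_n : [0,1] → [0,1] be a sequence of maps converging uniformly to a Borel measurable map τ : [0,1] → [0,1]. Assume each τ_n is piecewise monotone with at most q branches and expands distances by factor at least s on each branch. Then τ is nonsingular with respect to Lebesgue measure: for every Borel set A ⊆ [0,1] with m(A) = 0 one has m(τ^{-1}(A)) = 0; moreover m(τ^{-1}(A)) ≤ (q/s)·m(A) for every Borel set A. -/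
open MeasureTheory Filter Topology
open scoped ENNReal

/-!
On each of its at most `q` branches, `τₙ` is injective with inverse `s⁻¹`-Lipschitz, so
`m(τₙ⁻¹ B) ≤ (q/s)·m(B)` for every `B`. For closed `F`, uniform convergence puts `τ⁻¹ F` inside
`τₙ⁻¹` of the `ε`-thickening of `F` for large `n`, and letting `ε → 0` gives
`m(τ⁻¹ F) ≤ (q/s)·m(F)`. The pushforward `τ_* m` is a finite Borel measure on `ℝ`, hence
inner regular by closed sets, which extends the bound to all Borel sets.
-/

open Set

theorem volume_inter_preimage_le_of_expanding {T : ℝ → ℝ} {S : Set ℝ} {s : ℝ} (hs : 0 < s)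
    (hexp : ∀ x ∈ S, ∀ y ∈ S, s * |x - y| ≤ |T x - T y|) (A : Set ℝ) :
    volume (S ∩ T ⁻¹' A) ≤ ENNReal.ofReal s⁻¹ * volume A := by
  have hanti : AntilipschitzWith (Real.toNNReal s⁻¹) (S.domRestrict T) :=
    AntilipschitzWith.of_le_mul_dist fun x y => by
      rw [Real.coe_toNNReal _ (inv_nonneg.2 hs.le), inv_mul_eq_div, le_div_iff₀ hs, mul_comm]
      exact hexp x x.2 y y.2
  calc volume (S ∩ T ⁻¹' A)
      = μH[1] (S.domRestrict T ⁻¹' A) := by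
        rw [← Subtype.image_preimage_coe, ← hausdorffMeasure_real,
          isometry_subtype_coe.hausdorffMeasure_image (Or.inl zero_le_one)]
        rfl
    _ ≤ (Real.toNNReal s⁻¹ : ℝ≥0∞) ^ (1 : ℝ) * μH[1] A :=
        hanti.hausdorffMeasure_preimage_le zero_le_one A
    _ = ENNReal.ofReal s⁻¹ * volume A := by
        rw [ENNReal.rpow_one, hausdorffMeasure_real, ENNReal.ofReal]

theorem Icc_subset_biUnion_Icc_succ {α : Type*} [LinearOrder α] (a : ℕ → α) (n : ℕ) :
    Icc (a 0) (a (n + 1)) ⊆ ⋃ i ∈ Finset.range (n + 1), Icc (a i) (a (i + 1)) := by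
  induction n with
  | zero => simp
  | succ n ih =>
    rintro x ⟨h0, hn⟩
    rcases le_or_gt x (a (n + 1)) with hx | hx
    · exact biUnion_subset_biUnion_left (by simp) (ih ⟨h0, hx⟩)
    · exact mem_biUnion (by simp) ⟨hx.le, hn⟩

namespace PiecewiseMonotoneExpanding

variable {T : ℝ → ℝ} {q : ℕ} {s : ℝ}

theorem volume_preimage_inter_Icc_le (h : PiecewiseMonotoneExpanding T q s) (hs : 0 < s)
    (A : Set ℝ) :
    volume (T ⁻¹' A ∩ Icc 0 1) ≤ ENNReal.ofReal (q / s) * volume A := by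
  obtain ⟨r, a, hr, hrq, ha0, har, -, -, hexp⟩ := h
  obtain ⟨n, rfl⟩ := Nat.exists_eq_add_one_of_ne_zero hr.ne'
  have hcover : T ⁻¹' A ∩ Icc 0 1 ⊆
      ⋃ i ∈ Finset.range (n + 1), Icc (a i) (a (i + 1)) ∩ T ⁻¹' A := by
    rintro x ⟨hxA, hx⟩
    rw [← ha0, ← har] at hx
    obtain ⟨i, hi, hxi⟩ := mem_iUnion₂.1 (Icc_subset_biUnion_Icc_succ a n hx)
    exact mem_biUnion hi ⟨hxi, hxA⟩
  calc volume (T ⁻¹' A ∩ Icc 0 1)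
      ≤ ∑ i ∈ Finset.range (n + 1), volume (Icc (a i) (a (i + 1)) ∩ T ⁻¹' A) :=
        (measure_mono hcover).trans (measure_biUnion_finset_le _ _)
    _ = ∑ i ∈ Finset.range (n + 1), volume (Ioo (a i) (a (i + 1)) ∩ T ⁻¹' A) := by
        refine Finset.sum_congr rfl fun i _ => measure_congr ?_
        exact Ioo_ae_eq_Icc.symm.inter EventuallyEq.rfl
    _ ≤ ∑ _i ∈ Finset.range (n + 1), ENNReal.ofReal s⁻¹ * volume A :=
        Finset.sum_le_sum fun i hi =>
          volume_inter_preimage_le_of_expanding hs (hexp i (Finset.mem_range.1 hi)) A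
    _ ≤ q * (ENNReal.ofReal s⁻¹ * volume A) := by
        rw [Finset.sum_const, Finset.card_range, nsmul_eq_mul]
        gcongr
    _ = ENNReal.ofReal (q / s) * volume A := by
        rw [← mul_assoc, ← ENNReal.ofReal_natCast, ← ENNReal.ofReal_mul (Nat.cast_nonneg q),
          div_eq_mul_inv]

theorem volume_preimage_inter_Icc_le_of_mapsTo (h : PiecewiseMonotoneExpanding T q s)
    (hs : 0 < s) (hT : MapsTo T (Icc 0 1) (Icc 0 1)) (A : Set ℝ) :
    volume (T ⁻¹' A ∩ Icc 0 1) ≤ ENNReal.ofReal (q / s) * m A := by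
  have hpre : T ⁻¹' A ∩ Icc 0 1 = T ⁻¹' (A ∩ Icc 0 1) ∩ Icc 0 1 := by
    ext x
    exact ⟨fun ⟨hxA, hx⟩ => ⟨⟨hxA, hT hx⟩, hx⟩, fun ⟨⟨hxA, _⟩, hx⟩ => ⟨hxA, hx⟩⟩
  rw [hpre, m, Measure.restrict_apply' measurableSet_Icc]
  exact h.volume_preimage_inter_Icc_le hs _

end PiecewiseMonotoneExpanding

theorem measure_preimage_inter_le_of_tendstoUniformlyOn {X Y : Type*} [MeasurableSpace X]
    [PseudoMetricSpace Y] [MeasurableSpace Y] [OpensMeasurableSpace Y]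
    {μ : Measure X} {ν : Measure Y} [IsFiniteMeasure ν] {c : ℝ≥0∞} (hc : c ≠ ∞)
    {T : ℕ → X → Y} {τ : X → Y} {S : Set X} (hconv : TendstoUniformlyOn T τ atTop S)
    (hT : ∀ n U, IsOpen U → μ (T n ⁻¹' U ∩ S) ≤ c * ν U) {F : Set Y} (hF : IsClosed F) :
    μ (τ ⁻¹' F ∩ S) ≤ c * ν F := by
  have hthick : ∀ ε > 0, μ (τ ⁻¹' F ∩ S) ≤ c * ν (Metric.thickening ε F) := by
    intro ε hε
    obtain ⟨n, hn⟩ := (Metric.tendstoUniformlyOn_iff.1 hconv ε hε).exists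
    refine le_trans (measure_mono ?_) (hT n _ Metric.isOpen_thickening)
    rintro x ⟨hxF, hx⟩
    exact ⟨Metric.mem_thickening_iff.2 ⟨τ x, hxF, by simpa [dist_comm] using hn x hx⟩, hx⟩
  have hlim : Tendsto (fun ε => c * ν (Metric.thickening ε F)) (𝓝[>] 0) (𝓝 (c * ν F)) :=
    ENNReal.Tendsto.const_mul
      (tendsto_measure_thickening_of_isClosed ⟨1, one_pos, measure_ne_top _ _⟩ hF) (Or.inr hc)
  exact ge_of_tendsto hlim (eventually_nhdsWithin_of_forall hthick)

theorem MeasurableSet.measure_le_mul_of_forall_isClosed {Y : Type*} [MeasurableSpace Y]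
    [TopologicalSpace Y] {μ ν : Measure Y} [μ.WeaklyRegular] {c : ℝ≥0∞}
    (h : ∀ F, IsClosed F → μ F ≤ c * ν F) {A : Set Y} (hA : MeasurableSet A) (hμA : μ A ≠ ∞) :
    μ A ≤ c * ν A := by
  rw [hA.measure_eq_iSup_isClosed_of_ne_top hμA]
  exact iSup₂_le fun F hFA => iSup_le fun hF => (h F hF).trans (by gcongr)

theorem limit_map_nonsingular_general (q : ℕ) (s : ℝ) (hs : 0 < s)
    (τseq : ℕ → ℝ → ℝ) (τ : ℝ → ℝ) (hτmeas : Measurable τ)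
    (hmaps : ∀ n, Set.MapsTo (τseq n) (Set.Icc 0 1) (Set.Icc 0 1))
    (hconv : TendstoUniformlyOn τseq τ atTop (Set.Icc 0 1))
    (hpm : ∀ n, PiecewiseMonotoneExpanding (τseq n) q s) :
    (∀ A : Set ℝ, MeasurableSet A → m A = 0 → m (τ ⁻¹' A) = 0) ∧
    ∀ A : Set ℝ, MeasurableSet A → m (τ ⁻¹' A) ≤ ENNReal.ofReal ((q : ℝ) / s) * m A := by
  have : IsFiniteMeasure m := by unfold m; infer_instance
  have hbound : ∀ A : Set ℝ, MeasurableSet A →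
      m (τ ⁻¹' A) ≤ ENNReal.ofReal ((q : ℝ) / s) * m A := by
    intro A hA
    rw [← Measure.map_apply hτmeas hA]
    refine hA.measure_le_mul_of_forall_isClosed (fun F hF => ?_) (measure_ne_top _ _)
    rw [Measure.map_apply hτmeas hF.measurableSet, m, Measure.restrict_apply' measurableSet_Icc]
    exact measure_preimage_inter_le_of_tendstoUniformlyOn ENNReal.ofReal_ne_top hconv
      (fun n U _ => (hpm n).volume_preimage_inter_Icc_le_of_mapsTo hs (hmaps n) U) hF
  refine ⟨fun A hA hA0 => le_antisymm ?_ bot_le, hbound⟩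
  simpa [hA0] using hbound A hA

/-- If `τ_n ⇉ τ` on `[0,1]`, `τ` Borel, and each `τ_n` is piecewise monotone with at
most `q` branches expanding by at least `s`, then `τ` is nonsingular with respect to
Lebesgue measure and moreover `m(τ^{-1}(A)) ≤ (q/s)·m(A)` for every Borel `A`. -/
theorem limit_map_nonsingular (q : ℕ) (hq : 1 ≤ q) (s : ℝ) (hs : 0 < s)
    (τseq : ℕ → ℝ → ℝ) (τ : ℝ → ℝ) (hτmeas : Measurable τ)
    (hmaps : ∀ n, Set.MapsTo (τseq n) (Set.Icc 0 1) (Set.Icc 0 1))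
    (hτmaps : Set.MapsTo τ (Set.Icc 0 1) (Set.Icc 0 1))
    (hconv : TendstoUniformlyOn τseq τ atTop (Set.Icc 0 1))
    (hpm : ∀ n, PiecewiseMonotoneExpanding (τseq n) q s) :
    (∀ A : Set ℝ, MeasurableSet A → m A = 0 → m (τ ⁻¹' A) = 0) ∧
    ∀ A : Set ℝ, MeasurableSet A → m (τ ⁻¹' A) ≤ ENNReal.ofReal ((q : ℝ) / s) * m A :=
  limit_map_nonsingular_general q s hs τseq τ hτmeas hmaps hconv hpm
end

section
/- Let τ_n, τ : [0,1] → [0,1] be Borel measurable maps with τ_n converging uniformly to τ, and suppose there is a constant K such that m(τ^{-1}(A)) ≤ K·m(A) and m(τ_n^{-1}(A)) ≤ K·m(A) for every Borel set A and every n. Then for every F ∈ L¹([0,1], m) and every g ∈ L^∞([0,1], m), ∫₀¹ F·(g ∘ τ_n − g ∘ τ) dm → 0 as n → ∞. Equivalently, P_{τ_n} F − P_τ F → 0 weakly in L¹, where P_T F denotes the Frobenius–Perron operator (the Radon–Nikodym derivative of T_*(F·m) with respect to m). -/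
/-!
For every map `T` with `T_* m ≤ K m`, the bilinear form `(F, g) ↦ ∫ F · g ∘ T dm` moves by at most
`C ‖F - F₀‖₁ + M K ‖g - h‖₁` when `(F, g)` is replaced by `(F₀, h)`, where `|g| ≤ C` and `|F₀| ≤ M`;
the bound is uniform in `T`. So it suffices to treat a bounded `F₀` and a continuous compactly
supported `h`, and for those `h ∘ τ_n → h ∘ τ` uniformly on `[0,1]` since `h` is uniformly continuous.
-/

open MeasureTheory Filter Topology
open scoped ENNReal

theorem tendsto_nhds_zero_of_forall_approx {ι E : Type*} [SeminormedAddCommGroup E]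
    {l : Filter ι} {a : ι → E}
    (h : ∀ ε > 0, ∃ b : ι → E, Tendsto b l (𝓝 0) ∧ ∀ i, ‖a i - b i‖ ≤ ε) :
    Tendsto a l (𝓝 0) := by
  refine Metric.tendsto_nhds.2 fun ε hε => ?_
  obtain ⟨b, hb, hab⟩ := h (ε / 2) (half_pos hε)
  filter_upwards [Metric.tendsto_nhds.1 hb (ε / 2) (half_pos hε)] with i hi
  rw [dist_zero_right] at hi ⊢
  linarith [norm_le_norm_add_norm_sub' (a i) (b i), hab i]

theorem norm_mul_sub_mul_le {R : Type*} [SeminormedRing R] {a b u v : R} {C M : ℝ}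
    (hu : ‖u‖ ≤ C) (hb : ‖b‖ ≤ M) : ‖a * u - b * v‖ ≤ C * ‖a - b‖ + M * ‖u - v‖ :=
  calc ‖a * u - b * v‖ = ‖(a - b) * u + b * (u - v)‖ := by noncomm_ring
    _ ≤ ‖a - b‖ * ‖u‖ + ‖b‖ * ‖u - v‖ :=
        (norm_add_le _ _).trans (add_le_add (norm_mul_le _ _) (norm_mul_le _ _))
    _ ≤ C * ‖a - b‖ + M * ‖u - v‖ := by
        rw [mul_comm ‖a - b‖]
        gcongr

namespace MeasureTheory

variable {α β : Type*} [MeasurableSpace α] [MeasurableSpace β]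
  {μ : Measure α} {ν : Measure β} {T : α → β} {c : ℝ≥0∞}

theorem map_le_smul_of_measure_preimage_le (hT : Measurable T)
    (h : ∀ A, MeasurableSet A → μ (T ⁻¹' A) ≤ c * ν A) : μ.map T ≤ c • ν :=
  Measure.le_iff.2 fun A hA => by simpa [Measure.map_apply hT hA] using h A hA

theorem Integrable.comp_of_map_le_smul {E : Type*} [NormedAddCommGroup E] {f : β → E}
    (hf : Integrable f ν) (hT : Measurable T) (hc : c ≠ ∞) (hle : μ.map T ≤ c • ν) :
    Integrable (fun x => f (T x)) μ :=
  ((hf.smul_measure hc).mono_measure hle).comp_measurable hT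

theorem integral_norm_comp_le_of_map_le_smul {E : Type*} [NormedAddCommGroup E] {f : β → E}
    (hf : Integrable f ν) (hT : Measurable T) (hc : c ≠ ∞) (hle : μ.map T ≤ c • ν) :
    ∫ x, ‖f (T x)‖ ∂μ ≤ c.toReal * ∫ y, ‖f y‖ ∂ν :=
  calc ∫ x, ‖f (T x)‖ ∂μ = ∫ y, ‖f y‖ ∂(μ.map T) :=
        (integral_map hT.aemeasurable
          (hf.norm.smul_measure hc |>.mono_measure hle).aestronglyMeasurable).symm
    _ ≤ ∫ y, ‖f y‖ ∂(c • ν) :=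
        integral_mono_measure hle (ae_of_all _ fun _ => norm_nonneg _) (hf.norm.smul_measure hc)
    _ = c.toReal * ∫ y, ‖f y‖ ∂ν := by rw [integral_smul_measure, smul_eq_mul]

theorem norm_integral_mul_comp_sub_le [IsFiniteMeasure ν] {F F₀ : α → ℝ} {g h : β → ℝ} {C M : ℝ}
    (hT : Measurable T) (hc : c ≠ ∞) (hle : μ.map T ≤ c • ν)
    (hF : Integrable F μ) (hF₀ : Integrable F₀ μ) (hM : 0 ≤ M) (hF₀M : ∀ x, ‖F₀ x‖ ≤ M)
    (hg : Measurable g) (hgC : ∀ y, ‖g y‖ ≤ C) (hh : Integrable h ν) :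
    ‖∫ x, F x * g (T x) ∂μ - ∫ x, F₀ x * h (T x) ∂μ‖ ≤
      C * ∫ x, ‖F x - F₀ x‖ ∂μ + M * (c.toReal * ∫ y, ‖g y - h y‖ ∂ν) := by
  have hgh : Integrable (g - h) ν :=
    ((integrable_const C).mono' hg.aestronglyMeasurable (ae_of_all _ hgC)).sub hh
  have hFF₀ : Integrable (fun x => ‖F x - F₀ x‖) μ := (hF.sub hF₀).norm
  have hghT : Integrable (fun x => ‖g (T x) - h (T x)‖) μ :=
    (hgh.comp_of_map_le_smul hT hc hle).norm
  have hFg : Integrable (fun x => F x * g (T x)) μ :=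
    hF.mul_bdd (hg.comp hT).aestronglyMeasurable (ae_of_all _ fun _ => hgC _)
  have hF₀h : Integrable (fun x => F₀ x * h (T x)) μ :=
    (hh.comp_of_map_le_smul hT hc hle).bdd_mul hF₀.aestronglyMeasurable (ae_of_all _ hF₀M)
  rw [← integral_sub hFg hF₀h]
  calc ‖∫ x, (F x * g (T x) - F₀ x * h (T x)) ∂μ‖
      ≤ ∫ x, (C * ‖F x - F₀ x‖ + M * ‖g (T x) - h (T x)‖) ∂μ :=
        norm_integral_le_of_norm_le ((hFF₀.const_mul C).add (hghT.const_mul M))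
          (ae_of_all _ fun x => norm_mul_sub_mul_le (hgC _) (hF₀M x))
    _ = C * ∫ x, ‖F x - F₀ x‖ ∂μ + M * ∫ x, ‖g (T x) - h (T x)‖ ∂μ := by
        rw [integral_add (hFF₀.const_mul C) (hghT.const_mul M),
          integral_const_mul, integral_const_mul]
    _ ≤ C * ∫ x, ‖F x - F₀ x‖ ∂μ + M * (c.toReal * ∫ y, ‖g y - h y‖ ∂ν) := by
        gcongr
        exact integral_norm_comp_le_of_map_le_smul hgh hT hc hle

theorem integral_mul_sub_comp_eq {F : α → ℝ} {u : β → ℝ} {S : α → β} {B : ℝ}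
    (hF : Integrable F μ) (hu : Measurable u) (huB : ∀ y, ‖u y‖ ≤ B) (hS : Measurable S)
    (hT : Measurable T) :
    ∫ x, F x * (u (S x) - u (T x)) ∂μ = ∫ x, F x * u (S x) ∂μ - ∫ x, F x * u (T x) ∂μ := by
  simp_rw [mul_sub]
  exact integral_sub (hF.mul_bdd (hu.comp hS).aestronglyMeasurable (ae_of_all _ fun _ => huB _))
    (hF.mul_bdd (hu.comp hT).aestronglyMeasurable (ae_of_all _ fun _ => huB _))

theorem tendsto_integral_mul_sub_of_tendstoUniformlyOn {ι : Type*} {l : Filter ι} {s : Set α}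
    {F : α → ℝ} {G : ι → α → ℝ} {G₀ : α → ℝ} (hF : Integrable F μ) (hs : ∀ᵐ x ∂μ, x ∈ s)
    (hG : TendstoUniformlyOn G G₀ l s) :
    Tendsto (fun i => ∫ x, F x * (G i x - G₀ x) ∂μ) l (𝓝 0) := by
  refine Metric.tendsto_nhds.2 fun ε hε => ?_
  obtain ⟨δ, hδ, hδε⟩ := exists_pos_mul_lt hε (∫ x, ‖F x‖ ∂μ)
  filter_upwards [Metric.tendstoUniformlyOn_iff.1 hG δ hδ] with i hi
  rw [dist_zero_right]
  calc ‖∫ x, F x * (G i x - G₀ x) ∂μ‖ ≤ ∫ x, ‖F x‖ * δ ∂μ := by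
        refine norm_integral_le_of_norm_le (hF.norm.mul_const δ) ?_
        filter_upwards [hs] with x hx
        rw [norm_mul, ← dist_eq_norm, dist_comm]
        exact mul_le_mul_of_nonneg_left (hi x hx).le (norm_nonneg _)
    _ < ε := by rwa [integral_mul_const]

theorem exists_approx_integral_mul_comp {μ : Measure ℝ} [IsFiniteMeasure μ] [μ.Regular]
    {F g : ℝ → ℝ} {C : ℝ} (hF : Integrable F μ) (hg : Measurable g) (hgC : ∀ y, ‖g y‖ ≤ C)
    (hc : c ≠ ∞) {ε : ℝ} (hε : 0 < ε) :
    ∃ F₀ h : ℝ → ℝ, Integrable F₀ μ ∧ Continuous h ∧ HasCompactSupport h ∧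
      ∀ T : ℝ → ℝ, Measurable T → μ.map T ≤ c • μ →
        ‖∫ x, F x * g (T x) ∂μ - ∫ x, F₀ x * h (T x) ∂μ‖ ≤ ε := by
  have hC : 0 ≤ C := (norm_nonneg _).trans (hgC 0)
  have hgi : Integrable g μ :=
    (integrable_const C).mono' hg.aestronglyMeasurable (ae_of_all _ hgC)
  obtain ⟨δ₁, hδ₁, hCδ₁⟩ := exists_pos_mul_lt (half_pos hε) C
  obtain ⟨F₀, hF₀_supp, hFF₀, hF₀_cont, hF₀⟩ := hF.exists_hasCompactSupport_integral_sub_le hδ₁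
  obtain ⟨M, hF₀M⟩ := hF₀_supp.exists_bound_of_continuous hF₀_cont
  have hM : 0 ≤ M := (norm_nonneg _).trans (hF₀M 0)
  obtain ⟨δ₂, hδ₂, hMδ₂⟩ := exists_pos_mul_lt (half_pos hε) (M * c.toReal)
  obtain ⟨h, hh_supp, hgh, hh_cont, hh⟩ := hgi.exists_hasCompactSupport_integral_sub_le hδ₂
  refine ⟨F₀, h, hF₀, hh_cont, hh_supp, fun T hT hle => ?_⟩
  calc _ ≤ C * ∫ x, ‖F x - F₀ x‖ ∂μ + M * (c.toReal * ∫ y, ‖g y - h y‖ ∂μ) :=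
        norm_integral_mul_comp_sub_le hT hc hle hF hF₀ hM hF₀M hg hgC hh
    _ ≤ C * δ₁ + M * c.toReal * δ₂ := by
        rw [← mul_assoc]
        gcongr
    _ ≤ ε := by linarith

end MeasureTheory

instance : IsFiniteMeasure m := by
  unfold m
  infer_instance

instance : m.Regular :=
  Measure.Regular.restrict_of_measure_ne_top (by simp)

theorem integral_mul_comp_sub_tendsto_zero_general
    (τseq : ℕ → ℝ → ℝ) (τ : ℝ → ℝ)
    (hmeas : ∀ n, Measurable (τseq n)) (hτmeas : Measurable τ)
    (hconv : TendstoUniformlyOn τseq τ atTop (Set.Icc 0 1))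
    (K : ℝ)
    (hK : ∀ A : Set ℝ, MeasurableSet A → m (τ ⁻¹' A) ≤ ENNReal.ofReal K * m A)
    (hKn : ∀ n, ∀ A : Set ℝ, MeasurableSet A →
      m (τseq n ⁻¹' A) ≤ ENNReal.ofReal K * m A)
    (F : ℝ → ℝ) (hF : Integrable F m)
    (g : ℝ → ℝ) (hg : Measurable g) (C : ℝ) (hgb : ∀ x, |g x| ≤ C) :
    Tendsto (fun n => ∫ x, F x * (g (τseq n x) - g (τ x)) ∂m) atTop (𝓝 0) := by
  have hdom := map_le_smul_of_measure_preimage_le hτmeas hK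
  have hdomn n := map_le_smul_of_measure_preimage_le (hmeas n) (hKn n)
  refine tendsto_nhds_zero_of_forall_approx fun ε hε => ?_
  obtain ⟨F₀, h, hF₀, hh_cont, hh_supp, hest⟩ :=
    exists_approx_integral_mul_comp hF hg hgb (ENNReal.ofReal_ne_top (r := K)) (half_pos hε)
  obtain ⟨B, hhB⟩ := hh_supp.exists_bound_of_continuous hh_cont
  refine ⟨fun n => ∫ x, F₀ x * (h (τseq n x) - h (τ x)) ∂m,
    tendsto_integral_mul_sub_of_tendstoUniformlyOn hF₀ (ae_restrict_mem measurableSet_Icc)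
      ((hh_supp.uniformContinuous_of_continuous hh_cont).comp_tendstoUniformlyOn hconv),
    fun n => ?_⟩
  dsimp only
  rw [integral_mul_sub_comp_eq hF hg hgb (hmeas n) hτmeas,
    integral_mul_sub_comp_eq hF₀ hh_cont.measurable hhB (hmeas n) hτmeas]
  calc _ = ‖(∫ x, F x * g (τseq n x) ∂m - ∫ x, F₀ x * h (τseq n x) ∂m)
        - (∫ x, F x * g (τ x) ∂m - ∫ x, F₀ x * h (τ x) ∂m)‖ := by
          congr 1
          ring
    _ ≤ ε / 2 + ε / 2 :=
        (norm_sub_le _ _).trans (add_le_add (hest _ (hmeas n) (hdomn n)) (hest _ hτmeas hdom))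
    _ = ε := add_halves ε

/-- If `τ_n ⇉ τ` on `[0,1]` and the preimage measures of all the maps are uniformly
dominated, `m(τ_n^{-1}(A)) ≤ K·m(A)` and `m(τ^{-1}(A)) ≤ K·m(A)`, then for every
`F ∈ L¹` and `g ∈ L^∞`, `∫ F·(g ∘ τ_n − g ∘ τ) dm → 0`; i.e.
`P_{τ_n} F − P_τ F → 0` weakly in `L¹`. -/
theorem integral_mul_comp_sub_tendsto_zero
    (τseq : ℕ → ℝ → ℝ) (τ : ℝ → ℝ)
    (hmeas : ∀ n, Measurable (τseq n)) (hτmeas : Measurable τ)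
    (hmaps : ∀ n, Set.MapsTo (τseq n) (Set.Icc 0 1) (Set.Icc 0 1))
    (hτmaps : Set.MapsTo τ (Set.Icc 0 1) (Set.Icc 0 1))
    (hconv : TendstoUniformlyOn τseq τ atTop (Set.Icc 0 1))
    (K : ℝ)
    (hK : ∀ A : Set ℝ, MeasurableSet A → m (τ ⁻¹' A) ≤ ENNReal.ofReal K * m A)
    (hKn : ∀ n, ∀ A : Set ℝ, MeasurableSet A →
      m (τseq n ⁻¹' A) ≤ ENNReal.ofReal K * m A)
    (F : ℝ → ℝ) (hF : Integrable F m)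
    (g : ℝ → ℝ) (hg : Measurable g) (C : ℝ) (hgb : ∀ x, |g x| ≤ C) :
    Tendsto (fun n => ∫ x, F x * (g (τseq n x) - g (τ x)) ∂m) atTop (𝓝 0) :=
  integral_mul_comp_sub_tendsto_zero_general τseq τ hmeas hτmeas hconv K hK hKn F hF g hg C hgb
end
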